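/- Let k be a finite field, r ∈ k, x ∈ F_k a word, and β ∈ k. Then the word rβx (the letters r and β prepended to x) lies in A_r if and only if x lies in A_0. -/

import Mathlib

/-- The monoid homomorphism π sending a word α₁…α_l over k to the matrix product
[[0,1],[−1,α₁]] ⋯ [[0,1],[−1,α_l]]. -/
def piWord {k : Type*} [Field k] (w : List k) : Matrix (Fin 2) (Fin 2) k :=
  (w.map fun α => !![0, 1; -1, α]).prod

/-- A_r : words w with π(w) = [[a,b],[c,d]] satisfying d = b·r and b ≠ 0. -/
def Ar {k : Type*} [Field k] (r : k) : Set (List k) :=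
  {w | piWord w 1 1 = piWord w 0 1 * r ∧ piWord w 0 1 ≠ 0}

/-!
Prepending a letter α to a word multiplies π on the left by `!![0, 1; -1, α]`, which sends the
right column `(b, d)` of π(w) to `(d, -b + α d)`. For the word `r :: w` the condition `d = b r`
defining `Ar r` therefore collapses to `b = 0` for w, and one more letter β turns this into
`d = 0` for the rest of the word, which is the condition defining `Ar 0`.
-/

section

variable {k : Type*} [Field k]

theorem piWord_cons (α : k) (w : List k) : piWord (α :: w) = !![0, 1; -1, α] * piWord w := by
  simp [piWord]

theorem piWord_cons_zero_one (α : k) (w : List k) : piWord (α :: w) 0 1 = piWord w 1 1 := by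
  simp [piWord_cons, Matrix.mul_apply, Fin.sum_univ_two]

theorem piWord_cons_one_one (α : k) (w : List k) :
    piWord (α :: w) 1 1 = -piWord w 0 1 + α * piWord w 1 1 := by
  simp [piWord_cons, Matrix.mul_apply, Fin.sum_univ_two]

theorem mem_Ar_zero_iff (w : List k) : w ∈ Ar 0 ↔ piWord w 1 1 = 0 ∧ piWord w 0 1 ≠ 0 := by
  simp [Ar]

theorem cons_mem_Ar_self_iff (r : k) (w : List k) :
    r :: w ∈ Ar r ↔ piWord w 0 1 = 0 ∧ piWord w 1 1 ≠ 0 := by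
  simp only [Ar, Set.mem_ofPred_eq, piWord_cons_zero_one, piWord_cons_one_one]
  constructor
  · rintro ⟨h, hd⟩
    exact ⟨by linear_combination -h, hd⟩
  · rintro ⟨hb, hd⟩
    exact ⟨by rw [hb]; ring, hd⟩

end

theorem stmt7_general {k : Type*} [Field k] (r : k) (x : List k) (β : k) :
    r :: β :: x ∈ Ar r ↔ x ∈ Ar (0 : k) := by
  rw [cons_mem_Ar_self_iff, mem_Ar_zero_iff, piWord_cons_zero_one, piWord_cons_one_one]
  constructor
  · rintro ⟨hd, hb⟩
    refine ⟨hd, fun hb₀ => hb ?_⟩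
    rw [hd, hb₀]
    ring
  · rintro ⟨hd, hb⟩
    simpa [hd] using hb

theorem stmt7 {k : Type*} [Field k] [Fintype k] (r : k) (x : List k) (β : k) :
    r :: β :: x ∈ Ar r ↔ x ∈ Ar (0 : k) :=
  stmt7_general r x β
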